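/- Let G be a connected simple graph, let v, w be joined by a walk in G all of whose edges are bridges of G, and let p be the unique path in G from v to w. Then for every vertex y on p (i.e., y in the support of p), there is no vertex u admitting both a walk in G from u to v whose support does not contain y and a walk in G from u to w whose support does not contain y. -/

import Mathlib

/-!
A path `p` all of whose edges are bridges is the only path between its endpoints: its first
edge `s(v, a)` is a bridge, so it lies on the walk `q ++ p'.reverse` from `v` to `a` built from
any other path `q`, and since `v` is not on the tail `p'` of `p` it must be the first edge of `q`
too. Hence every walk from `v` to `w`, which contains a path from `v` to `w`, passes through
every vertex of `p`; a vertex `u` joined to `v` and to `w` avoiding `y` would give such a walk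
avoiding `y`.
-/

namespace SimpleGraph.Walk

variable {V : Type*} {G : SimpleGraph V}

theorem IsPath.eq_of_forall_isBridge {v w : V} {p q : G.Walk v w} (hp : p.IsPath)
    (hb : ∀ e ∈ p.edges, G.IsBridge e) (hq : q.IsPath) : q = p := by
  induction p with
  | nil => exact (isPath_iff_nil.mp hq).eq_nil
  | @cons v a w hva p ih =>
    rw [cons_isPath_iff] at hp
    have hbridge := isBridge_iff_forall_walk_mem_edges.mp (hb _ (by simp)) (q.append p.reverse)
    rw [edges_append, edges_reverse, List.mem_append, List.mem_reverse] at hbridge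
    obtain hq_edge | hp_edge := hbridge
    · cases q with
      | nil => exact absurd (end_mem_support p) hp.2
      | cons hvb q =>
        rw [cons_isPath_iff] at hq
        simp only [edges_cons, List.mem_cons, Sym2.eq_iff, true_and] at hq_edge
        obtain (rfl | ⟨rfl, -⟩) | hq_edge := hq_edge
        · rw [ih hp.1 (fun e he => hb e (by simp [he])) hq.1]
        · exact absurd hvb G.irrefl
        · exact absurd (fst_mem_support_of_mem_edges q hq_edge) hq.2
    · exact absurd (fst_mem_support_of_mem_edges p hp_edge) hp.2

theorem support_subset_support_of_forall_isBridge [DecidableEq V] {v w : V} {p : G.Walk v w}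
    (hp : p.IsPath) (hb : ∀ e ∈ p.edges, G.IsBridge e) (r : G.Walk v w) :
    p.support ⊆ r.support := by
  rw [← hp.eq_of_forall_isBridge hb r.toPath.2]
  exact support_toPath_subset_support r

end SimpleGraph.Walk

open SimpleGraph

theorem stmt_12_general {V : Type*} (G : SimpleGraph V) (v w : V)
    (h : ∃ q : G.Walk v w, ∀ e ∈ q.edges, G.IsBridge e)
    (p : G.Walk v w) (hp : p.IsPath) :
    ∀ y ∈ p.support,
      ¬ ∃ u : V, (∃ q : G.Walk u v, y ∉ q.support) ∧ (∃ q' : G.Walk u w, y ∉ q'.support) := by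
  classical
  obtain ⟨q, hq⟩ := h
  have hb : ∀ e ∈ (q.toPath : G.Walk v w).edges, G.IsBridge e :=
    fun e he => hq e (Walk.edges_toPath_subset_edges q he)
  have hp_eq : p = q.toPath := q.toPath.2.eq_of_forall_isBridge hb hp
  rintro y hy ⟨u, ⟨r₁, hr₁⟩, ⟨r₂, hr₂⟩⟩
  have hy_mem := Walk.support_subset_support_of_forall_isBridge q.toPath.2 hb
    (r₁.reverse.append r₂) (hp_eq ▸ hy)
  rw [Walk.mem_support_append_iff, Walk.support_reverse, List.mem_reverse] at hy_mem
  exact hy_mem.elim hr₁ hr₂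

/-- Let `G` be a connected simple graph, let `v, w` be joined by a walk all of whose
edges are bridges of `G`, and let `p` be the (unique) path in `G` from `v` to `w`.
Then for every vertex `y` on `p`, there is no vertex `u` admitting both a walk from `u`
to `v` whose support does not contain `y` and a walk from `u` to `w` whose support does
not contain `y`. -/
theorem stmt_12 {V : Type*} (G : SimpleGraph V) (hG : G.Connected) (v w : V)
    (h : ∃ q : G.Walk v w, ∀ e ∈ q.edges, G.IsBridge e)
    (p : G.Walk v w) (hp : p.IsPath) :
    ∀ y ∈ p.support,
      ¬ ∃ u : V, (∃ q : G.Walk u v, y ∉ q.support) ∧ (∃ q' : G.Walk u w, y ∉ q'.support) :=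
  stmt_12_general G v w h p hp
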